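/- Let ζ > 0. For each n ∈ ℕ let (h_n, w_n) ∈ Σ([0,ζ]) and let (h, w) ∈ Σ([0,ζ]). Suppose that h_n → h in C⁰(ℝ≥0, ℝ≥0) and that sup_{s∈[0,ζ]} δ(w_n(s), w(s)) → 0, where δ is a metric on C⁰(ℝ≥0, ℝ) inducing uniform convergence on every compact interval. Then sup_{s1,s2∈[0,ζ]} |d_{h_n}(s1,s2) − d_h(s1,s2)| → 0 and sup_{s1,s2∈[0,ζ]} |d_{h_n,w_n}(s1,s2) − d_{h,w}(s1,s2)| → 0 as n → ∞. -/

import Mathlib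

open Filter Topology
open scoped NNReal
open scoped Uniformity

/-- `m_h(s1, s2) = min { h u : u ∈ [s1 ∧ s2, s1 ∨ s2] }` for a lifetime process `h`. -/
noncomputable def snakeInf (h : C(ℝ≥0, ℝ≥0)) (s1 s2 : ℝ≥0) : ℝ≥0 :=
  sInf ((fun u => h u) '' Set.uIcc s1 s2)

/-- A (`E`-valued) snake. -/
def IsSnake {E : Type*} [TopologicalSpace E] (h : C(ℝ≥0, ℝ≥0)) (w : C(ℝ≥0, C(ℝ≥0, E))) : Prop :=
  (∀ s r, h s ≤ r → w s r = w s (h s)) ∧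
  ∀ s1 s2 r, r ≤ snakeInf h s1 s2 → w s1 r = w s2 r

/-- The real-tree pseudometric `d_h(s1,s2) = h s1 + h s2 - 2 m_h(s1,s2)` coded by `h`. -/
noncomputable def treeDist (h : C(ℝ≥0, ℝ≥0)) (s1 s2 : ℝ≥0) : ℝ :=
  (h s1 : ℝ) + (h s2 : ℝ) - 2 * (snakeInf h s1 s2 : ℝ)

/-- `M_{h,w}(s1,s2)`. -/
noncomputable def snakeM (h : C(ℝ≥0, ℝ≥0)) (w : C(ℝ≥0, C(ℝ≥0, ℝ))) (s1 s2 : ℝ≥0) : ℝ :=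
  min (sInf ((fun r => w s1 r) '' Set.Ici (snakeInf h s1 s2)))
      (sInf ((fun r => w s2 r) '' Set.Ici (snakeInf h s1 s2)))

/-- The snake-pseudometric `d_{h,w}`. -/
noncomputable def snakeDist (h : C(ℝ≥0, ℝ≥0)) (w : C(ℝ≥0, C(ℝ≥0, ℝ))) (s1 s2 : ℝ≥0) : ℝ :=
  w s1 (h s1) + w s2 (h s2) - 2 * snakeM h w s1 s2

lemma snakeInf_le_left' (h : C(ℝ≥0, ℝ≥0)) (s1 s2 : ℝ≥0) : snakeInf h s1 s2 ≤ h s1 :=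
  csInf_le (OrderBot.bddBelow _) ⟨s1, Set.left_mem_uIcc, rfl⟩

lemma snakeInf_comp' (h1 h2 : C(ℝ≥0, ℝ≥0)) (s1 s2 : ℝ≥0) {ε : ℝ}
    (hclose : ∀ u ∈ Set.uIcc s1 s2, (h1 u : ℝ) ≤ (h2 u : ℝ) + ε) :
    (snakeInf h1 s1 s2 : ℝ) ≤ (snakeInf h2 s1 s2 : ℝ) + ε := by
  have huIcc : Set.uIcc s1 s2 = Set.Icc (s1 ⊓ s2) (s1 ⊔ s2) := rfl
  obtain ⟨u0, hu0, hmin⟩ := (huIcc ▸ isCompact_Icc : IsCompact (Set.uIcc s1 s2)).exists_isMinOn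
    ⟨s1, Set.left_mem_uIcc⟩ (h2.continuous.continuousOn)
  have h2eq : snakeInf h2 s1 s2 = h2 u0 := by
    refine le_antisymm (csInf_le (OrderBot.bddBelow _) ⟨u0, hu0, rfl⟩) ?_
    exact le_csInf ⟨_, ⟨u0, hu0, rfl⟩⟩ (by rintro y ⟨u, hu, rfl⟩; exact hmin hu)
  have h1le : snakeInf h1 s1 s2 ≤ h1 u0 := csInf_le (OrderBot.bddBelow _) ⟨u0, hu0, rfl⟩
  calc (snakeInf h1 s1 s2 : ℝ) ≤ (h1 u0 : ℝ) := by exact_mod_cast h1le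
    _ ≤ (h2 u0 : ℝ) + ε := hclose u0 hu0
    _ = (snakeInf h2 s1 s2 : ℝ) + ε := by rw [h2eq]

lemma image_Ici_eq_image_Icc' (f : C(ℝ≥0, ℝ)) {h0 a c : ℝ≥0}
    (hconst : ∀ r, h0 ≤ r → f r = f h0) (hac : a ≤ c) (hhc : h0 ≤ c) :
    (fun r => f r) '' Set.Ici a = (fun r => f r) '' Set.Icc a c := by
  apply Set.Subset.antisymm
  · rintro _ ⟨r, hr, rfl⟩
    by_cases hrc : r ≤ c
    · exact ⟨r, ⟨hr, hrc⟩, rfl⟩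
    · refine ⟨max a h0, ⟨le_max_left _ _, max_le hac hhc⟩, ?_⟩
      show f (max a h0) = f r
      rw [hconst r (hhc.trans (not_le.1 hrc).le), hconst (max a h0) (le_max_right _ _)]
  · rintro _ ⟨r, hr, rfl⟩
    exact ⟨r, hr.1, rfl⟩

/-- The key one-sided comparison of truncated infima. -/
lemma sInf_Ici_comp' (f g : C(ℝ≥0, ℝ)) {hf0 hg0 a b K : ℝ≥0} {ε1 ε2 δ : ℝ}
    (hfc : ∀ r, hf0 ≤ r → f r = f hf0) (hgc : ∀ r, hg0 ≤ r → g r = g hg0)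
    (hfK : hf0 ≤ K) (hgK : hg0 ≤ K) (haK : a ≤ K) (hbK : b ≤ K)
    (hε2 : 0 ≤ ε2)
    (hclose : ∀ r : ℝ≥0, r ≤ K → f r ≤ g r + ε1)
    (hab : (a : ℝ) ≤ (b : ℝ) + δ)
    (hmod : ∀ r r' : ℝ≥0, r ≤ K → r' ≤ K → |(r : ℝ) - (r' : ℝ)| ≤ δ → g r ≤ g r' + ε2) :
    sInf ((fun r => f r) '' Set.Ici a) ≤ sInf ((fun r => g r) '' Set.Ici b) + (ε1 + ε2) := by
  rw [image_Ici_eq_image_Icc' f hfc haK hfK, image_Ici_eq_image_Icc' g hgc hbK hgK]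
  obtain ⟨r0, hr0, hmin⟩ := (isCompact_Icc).exists_isMinOn (Set.nonempty_Icc.2 hbK)
    (g.continuous.continuousOn)
  have hgeq : sInf ((fun r => g r) '' Set.Icc b K) = g r0 := by
    refine le_antisymm (csInf_le ?_ ⟨r0, hr0, rfl⟩) ?_
    · exact ⟨g r0, by rintro y ⟨r, hr, rfl⟩; exact hmin hr⟩
    · exact le_csInf ⟨_, ⟨r0, hr0, rfl⟩⟩ (by rintro y ⟨r, hr, rfl⟩; exact hmin hr)
  have hbdd : BddBelow ((fun r => f r) '' Set.Icc a K) :=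
    ((isCompact_Icc.image f.continuous).bddBelow)
  by_cases hra : a ≤ r0
  · have h1 : sInf ((fun r => f r) '' Set.Icc a K) ≤ f r0 :=
      csInf_le hbdd ⟨r0, ⟨hra, hr0.2⟩, rfl⟩
    have h2 : f r0 ≤ g r0 + ε1 := hclose r0 hr0.2
    rw [hgeq]; linarith
  · push_neg at hra
    have h1 : sInf ((fun r => f r) '' Set.Icc a K) ≤ f a :=
      csInf_le hbdd ⟨a, ⟨le_refl a, haK⟩, rfl⟩
    have h2 : f a ≤ g a + ε1 := hclose a haK
    have h3 : g a ≤ g r0 + ε2 := by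
      apply hmod a r0 haK hr0.2
      have hbr : (b : ℝ) ≤ (r0 : ℝ) := by exact_mod_cast hr0.1
      have hra' : (r0 : ℝ) ≤ (a : ℝ) := le_of_lt (by exact_mod_cast hra)
      rw [abs_of_nonneg (by linarith)]; linarith
    rw [hgeq]; linarith

/-- Lemma 2.35 of the paper. If one-dimensional snakes `(h n, w n)` of
duration `ζ` converge to a snake `(hl, wl)` of duration `ζ` — the lifetimes in
`C⁰(ℝ≥0, ℝ≥0)` and the paths uniformly on `[0,ζ]` with values in `C⁰(ℝ≥0, ℝ)` — then the
tree pseudometrics `d_{h n}` and the snake-pseudometrics `d_{h n, w n}` converge uniformly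
on `[0,ζ]²` to `d_{hl}` and `d_{hl, wl}` respectively. -/
theorem stmt9 (ζ : ℝ≥0) (hζ : 0 < ζ)
    (h : ℕ → C(ℝ≥0, ℝ≥0)) (w : ℕ → C(ℝ≥0, C(ℝ≥0, ℝ)))
    (hl : C(ℝ≥0, ℝ≥0)) (wl : C(ℝ≥0, C(ℝ≥0, ℝ)))
    (hsn : ∀ n, IsSnake (h n) (w n)) (hsnl : IsSnake hl wl)
    (hdur : ∀ n s, ζ ≤ s → h n s = 0) (hdurl : ∀ s, ζ ≤ s → hl s = 0)
    (hcv : Tendsto h atTop (𝓝 hl))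
    (wcv : TendstoUniformlyOn (fun n u => w n u) (fun u => wl u) atTop (Set.Icc 0 ζ)) :
    TendstoUniformlyOn (fun n (p : ℝ≥0 × ℝ≥0) => treeDist (h n) p.1 p.2)
        (fun p => treeDist hl p.1 p.2) atTop (Set.Icc 0 ζ ×ˢ Set.Icc 0 ζ) ∧
    TendstoUniformlyOn (fun n (p : ℝ≥0 × ℝ≥0) => snakeDist (h n) (w n) p.1 p.2)
        (fun p => snakeDist hl wl p.1 p.2) atTop (Set.Icc 0 ζ ×ˢ Set.Icc 0 ζ) := by
  have hIccζ : IsCompact (Set.Icc (0:ℝ≥0) ζ) := isCompact_Icc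
  obtain ⟨M, hM⟩ : ∃ M : ℝ≥0, ∀ u ∈ Set.Icc (0:ℝ≥0) ζ, hl u ≤ M := by
    obtain ⟨M, hM⟩ := (hIccζ.image hl.continuous).bddAbove
    exact ⟨M, fun u hu => hM ⟨u, hu, rfl⟩⟩
  set K : ℝ≥0 := M + 1 with hKdef
  have hMK : M ≤ K := le_self_add
  have hcvU : TendstoUniformlyOn (fun n u => h n u) (fun u => hl u) atTop (Set.Icc 0 ζ) :=
    (ContinuousMap.tendsto_iff_forall_isCompact_tendstoUniformlyOn.mp hcv) _ hIccζ
  -- joint uniform continuity of wl on [0,ζ] × [0,K]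
  have hFcont : Continuous (fun p : ℝ≥0 × ℝ≥0 => wl p.1 p.2) :=
    continuous_eval.comp ((wl.continuous.comp continuous_fst).prodMk continuous_snd)
  have hFuc : UniformContinuousOn (fun p : ℝ≥0 × ℝ≥0 => wl p.1 p.2)
      (Set.Icc 0 ζ ×ˢ Set.Icc 0 K) :=
    (hIccζ.prod isCompact_Icc).uniformContinuousOn_of_continuous hFcont.continuousOn
  constructor
  · -- tree distances
    refine Metric.tendstoUniformlyOn_iff.2 fun ε hε => ?_
    set θ : ℝ := min (ε/8) 1 with hθdef
    have hθpos : (0:ℝ) < θ := lt_min (by linarith) one_pos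
    filter_upwards [Metric.tendstoUniformlyOn_iff.1 hcvU θ hθpos] with n hn p hp
    obtain ⟨hp1, hp2⟩ := hp
    have hsub : Set.uIcc p.1 p.2 ⊆ Set.Icc 0 ζ := by
      rintro u ⟨_, hu2⟩
      exact ⟨zero_le, le_trans hu2 (sup_le hp1.2 hp2.2)⟩
    have c1 : ∀ u ∈ Set.uIcc p.1 p.2, ((h n) u : ℝ) ≤ (hl u : ℝ) + θ := fun u hu => by
      have := hn u (hsub hu); rw [NNReal.dist_eq, abs_lt] at this; linarith [this.1]
    have c2 : ∀ u ∈ Set.uIcc p.1 p.2, (hl u : ℝ) ≤ ((h n) u : ℝ) + θ := fun u hu => by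
      have := hn u (hsub hu); rw [NNReal.dist_eq, abs_lt] at this; linarith [this.2]
    have m1 := snakeInf_comp' (h n) hl p.1 p.2 c1
    have m2 := snakeInf_comp' hl (h n) p.1 p.2 c2
    have e1 := hn p.1 hp1
    have e2 := hn p.2 hp2
    rw [NNReal.dist_eq, abs_lt] at e1 e2
    have hθε : θ ≤ ε/8 := min_le_left _ _
    rw [Real.dist_eq, abs_lt]
    simp only [treeDist]
    constructor <;> nlinarith [e1.1, e1.2, e2.1, e2.2]
  · -- snake distances
    refine Metric.tendstoUniformlyOn_iff.2 fun ε hε => ?_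
    set ε' : ℝ := ε/16 with hε'def
    have hε'pos : (0:ℝ) < ε' := by positivity
    obtain ⟨δ, hδpos, hδ⟩ := Metric.uniformContinuousOn_iff.1 hFuc ε' hε'pos
    -- modulus of continuity for wl, uniform in s
    have hmodR : ∀ s ∈ Set.Icc (0:ℝ≥0) ζ, ∀ r r' : ℝ≥0, r ≤ K → r' ≤ K →
        |(r : ℝ) - (r' : ℝ)| ≤ δ/2 → |wl s r - wl s r'| ≤ ε' := by
      intro s hs r r' hrK hr'K hrr'
      have hx : ((s, r) : ℝ≥0 × ℝ≥0) ∈ Set.Icc (0:ℝ≥0) ζ ×ˢ Set.Icc (0:ℝ≥0) K :=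
        ⟨hs, ⟨zero_le, hrK⟩⟩
      have hy : ((s, r') : ℝ≥0 × ℝ≥0) ∈ Set.Icc (0:ℝ≥0) ζ ×ˢ Set.Icc (0:ℝ≥0) K :=
        ⟨hs, ⟨zero_le, hr'K⟩⟩
      have hdist : dist ((s, r) : ℝ≥0 × ℝ≥0) (s, r') < δ := by
        rw [Prod.dist_eq]
        simp only [dist_self]
        rw [NNReal.dist_eq]
        have : |(r : ℝ) - (r' : ℝ)| < δ := lt_of_le_of_lt hrr' (by linarith)
        exact max_lt hδpos this
      have := hδ _ hx _ hy hdist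
      rw [Real.dist_eq] at this
      exact this.le
    set θ : ℝ := min ε' (min (δ/2) 1) with hθdef
    have hθpos : (0:ℝ) < θ := lt_min hε'pos (lt_min (by linarith) one_pos)
    have hθε' : θ ≤ ε' := min_le_left _ _
    have hθδ : θ ≤ δ/2 := (min_le_right _ _).trans (min_le_left _ _)
    have hθ1 : θ ≤ 1 := (min_le_right _ _).trans (min_le_right _ _)
    -- entourage for w-convergence
    have hent : {fg : C(ℝ≥0,ℝ) × C(ℝ≥0,ℝ) |
        ∀ r ∈ Set.Icc (0:ℝ≥0) K, dist (fg.1 r) (fg.2 r) < ε'} ∈ 𝓤 C(ℝ≥0, ℝ) := by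
      have := ContinuousMap.hasBasis_compactConvergenceUniformity
        (α := ℝ≥0) (β := ℝ) |>.mem_of_mem
        (i := (Set.Icc (0:ℝ≥0) K, {q : ℝ × ℝ | dist q.1 q.2 < ε'}))
        ⟨isCompact_Icc, Metric.dist_mem_uniformity hε'pos⟩
      exact this
    filter_upwards [Metric.tendstoUniformlyOn_iff.1 hcvU θ hθpos, wcv _ hent] with n hn hwn p hp
    obtain ⟨hp1, hp2⟩ := hp
    -- basic closeness facts
    have hub : ∀ u ∈ Set.Icc (0:ℝ≥0) ζ, |(hl u : ℝ) - (h n u : ℝ)| < θ := fun u hu => by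
      have := hn u hu; rwa [NNReal.dist_eq] at this
    have hhnK : ∀ u ∈ Set.Icc (0:ℝ≥0) ζ, h n u ≤ K := fun u hu => by
      have h1 := (abs_lt.1 (hub u hu)).1
      have h2 : (hl u : ℝ) ≤ M := by exact_mod_cast hM u hu
      have : (h n u : ℝ) ≤ (K : ℝ) := by
        push_cast [hKdef]; linarith
      exact_mod_cast this
    have hhlK : ∀ u ∈ Set.Icc (0:ℝ≥0) ζ, hl u ≤ K := fun u hu => (hM u hu).trans hMK
    have hwc : ∀ s ∈ Set.Icc (0:ℝ≥0) ζ, ∀ r : ℝ≥0, r ≤ K →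
        |wl s r - w n s r| < ε' := fun s hs r hr => by
      have := hwn s hs r ⟨zero_le, hr⟩
      rwa [Real.dist_eq] at this
    have hsub : Set.uIcc p.1 p.2 ⊆ Set.Icc 0 ζ := by
      rintro u ⟨_, hu2⟩
      exact ⟨zero_le, le_trans hu2 (sup_le hp1.2 hp2.2)⟩
    -- snakeInf closeness
    have c1 : ∀ u ∈ Set.uIcc p.1 p.2, ((h n) u : ℝ) ≤ (hl u : ℝ) + θ := fun u hu => by
      have := abs_lt.1 (hub u (hsub hu)); linarith [this.1]
    have c2 : ∀ u ∈ Set.uIcc p.1 p.2, (hl u : ℝ) ≤ ((h n) u : ℝ) + θ := fun u hu => by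
      have := abs_lt.1 (hub u (hsub hu)); linarith [this.2]
    have m1 := snakeInf_comp' (h n) hl p.1 p.2 c1
    have m2 := snakeInf_comp' hl (h n) p.1 p.2 c2
    set mn := snakeInf (h n) p.1 p.2 with hmndef
    set ml := snakeInf hl p.1 p.2 with hmldef
    have hmnK : mn ≤ K := (snakeInf_le_left' (h n) p.1 p.2).trans (hhnK p.1 hp1)
    have hmlK : ml ≤ K := (snakeInf_le_left' hl p.1 p.2).trans (hhlK p.1 hp1)
    -- the per-coordinate infimum comparison
    have key : ∀ s ∈ Set.Icc (0:ℝ≥0) ζ,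
        |sInf ((fun r => w n s r) '' Set.Ici mn) - sInf ((fun r => wl s r) '' Set.Ici ml)|
          ≤ 2 * ε' := by
      intro s hs
      have hfc : ∀ r, h n s ≤ r → w n s r = w n s (h n s) := fun r hr => (hsn n).1 s r hr
      have hgc : ∀ r, hl s ≤ r → wl s r = wl s (hl s) := fun r hr => hsnl.1 s r hr
      have hfK := hhnK s hs
      have hgK := hhlK s hs
      have hmodwl : ∀ r r' : ℝ≥0, r ≤ K → r' ≤ K → |(r : ℝ) - (r' : ℝ)| ≤ δ/2 →
          wl s r ≤ wl s r' + ε' := fun r r' h1 h2 h3 => by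
        have := hmodR s hs r r' h1 h2 h3
        have := abs_le.1 this; linarith [this.1]
      -- forward
      have fwd : sInf ((fun r => w n s r) '' Set.Ici mn)
          ≤ sInf ((fun r => wl s r) '' Set.Ici ml) + (ε' + ε') := by
        apply sInf_Ici_comp' (ε1 := ε') (ε2 := ε') (δ := δ/2) (w n s) (wl s) hfc hgc hfK hgK hmnK hmlK hε'pos.le
        · intro r hr
          have := abs_lt.1 (hwc s hs r hr); linarith [this.1]
        · linarith [hθδ]
        · exact hmodwl
      -- backward, in two steps
      have bwd1 : sInf ((fun r => wl s r) '' Set.Ici ml)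
          ≤ sInf ((fun r => wl s r) '' Set.Ici mn) + (0 + ε') := by
        apply sInf_Ici_comp' (ε1 := 0) (ε2 := ε') (δ := δ/2) (wl s) (wl s) hgc hgc hgK hgK hmlK hmnK hε'pos.le
        · intro r _; simp
        · linarith [hθδ]
        · exact hmodwl
      have bwd2 : sInf ((fun r => wl s r) '' Set.Ici mn)
          ≤ sInf ((fun r => w n s r) '' Set.Ici mn) + (ε' + 0) := by
        apply sInf_Ici_comp' (ε1 := ε') (ε2 := 0) (δ := 0) (wl s) (w n s) hgc hfc hgK hfK hmnK hmnK le_rfl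
        · intro r hr
          have := abs_lt.1 (hwc s hs r hr); linarith [this.2]
        · simp
        · intro r r' _ _ habs
          have : (r : ℝ) = (r' : ℝ) := by
            have := abs_nonneg ((r:ℝ) - r'); have h0 := le_antisymm habs (abs_nonneg _)
            rwa [abs_eq_zero, sub_eq_zero] at h0
          have : r = r' := by exact_mod_cast this
          simp [this]
      rw [abs_le]
      constructor <;> linarith
    have key1 := key p.1 hp1
    have key2 := key p.2 hp2
    -- snakeM comparison
    have hMcomp : |snakeM (h n) (w n) p.1 p.2 - snakeM hl wl p.1 p.2| ≤ 2 * ε' := by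
      simp only [snakeM, ← hmndef, ← hmldef]
      refine (abs_min_sub_min_le_max _ _ _ _).trans (max_le key1 key2)
    -- endpoint comparison
    have hend : ∀ s ∈ Set.Icc (0:ℝ≥0) ζ,
        |w n s (h n s) - wl s (hl s)| ≤ 2 * ε' := by
      intro s hs
      have e1 : |wl s (h n s) - w n s (h n s)| < ε' := hwc s hs _ (hhnK s hs)
      have e2 : |wl s (h n s) - wl s (hl s)| ≤ ε' := by
        apply hmodR s hs _ _ (hhnK s hs) (hhlK s hs)
        have := abs_lt.1 (hub s hs)
        rw [abs_le]; constructor <;> linarith [hθδ, this.1, this.2]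
      calc |w n s (h n s) - wl s (hl s)|
          ≤ |w n s (h n s) - wl s (h n s)| + |wl s (h n s) - wl s (hl s)| := abs_sub_le _ _ _
        _ ≤ ε' + ε' := by
            rw [abs_sub_comm] at e1
            linarith
        _ = 2 * ε' := by ring
    have hend1 := hend p.1 hp1
    have hend2 := hend p.2 hp2
    rw [Real.dist_eq]
    simp only [snakeDist]
    have a1 := abs_le.1 hend1
    have a2 := abs_le.1 hend2
    have a3 := abs_le.1 hMcomp
    rw [abs_lt]
    constructor <;> linarith [a1.1, a1.2, a2.1, a2.2, a3.1, a3.2, hε'pos]
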